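/- arXiv:2309.01534 — 2 statements merged into one kernel-verified Lean document; each statement's English description precedes it below -/
import Mathlib

section
/- Let E be a measurable space, P, Q probability measures on E with Q ≪ P, and φ : E → ℝ a measurable function bounded from below such that E^P[exp(−φ)] > 0. Define the probability measure Q* by dQ* = (exp(−φ)/E^P[exp(−φ)]) dP. Then for every probability measure Q with H(Q|P) < ∞, one has E^Q[φ] + H(Q|P) ≥ −log E^P[exp(−φ)], with equality if and only if Q = Q*. In particular inf_Q (E^Q[φ] + H(Q|P)) = −log E^P[exp(−φ)] and Q* is the unique minimizer. -/
open MeasureTheory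

/-- Real-valued relative entropy `H(Q|P) = E^Q[log dQ/dP]`. -/
noncomputable def relEnt2 {Ω : Type*} [MeasurableSpace Ω] (Q P : Measure Ω) : ℝ :=
  ∫ ω, Real.log ((Q.rnDeriv P ω).toReal) ∂Q

/-- `H(Q|P) < ∞`: `Q ≪ P` and the log-density is `Q`-integrable. -/
def FiniteRelEnt2 {Ω : Type*} [MeasurableSpace Ω] (Q P : Measure Ω) : Prop :=
  Q ≪ P ∧ Integrable (fun ω => Real.log ((Q.rnDeriv P ω).toReal)) Q

/-!
For `f = -φ` the Donsker–Varadhan gap `log E^P[exp f] - (E^Q[f] - H(Q|P))` is exactly the relative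
entropy `H(Q | P.tilted f)` of `Q` with respect to the Gibbs measure, so the inequality and its
equality case are Gibbs' inequality `H ≥ 0` and its converse `H = 0 → Q = P.tilted f`. At the Gibbs
measure itself the log-density is `f - log E^P[exp f]`, which gives equality. That `φ` is bounded
below makes `exp (-φ)` and `φ exp (-φ)` bounded, so every integral involved is finite.
-/

open Real InformationTheory

section Gibbs

variable {α : Type*} [MeasurableSpace α] {μ ν : Measure α}
  [IsProbabilityMeasure μ] [IsProbabilityMeasure ν]

lemma integral_llr_nonneg (hμν : μ ≪ ν) (h_int : Integrable (llr μ ν) μ) :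
    0 ≤ ∫ x, llr μ ν x ∂μ := by
  simpa using integral_llr_add_sub_measure_univ_nonneg hμν h_int

lemma eq_of_integral_llr_eq_zero (hμν : μ ≪ ν) (h_int : Integrable (llr μ ν) μ)
    (h : ∫ x, llr μ ν x ∂μ = 0) : μ = ν := by
  rw [← klDiv_eq_zero_iff, klDiv_of_ac_of_integrable hμν h_int]
  simp [h]

end Gibbs

section DonskerVaradhan

variable {α : Type*} [MeasurableSpace α] {μ ν : Measure α}
  [IsProbabilityMeasure μ] [IsProbabilityMeasure ν] {f : α → ℝ}

lemma integral_llr_tilted_right_eq_log_integral_exp_sub (hμν : μ ≪ ν) (hf : Integrable f μ)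
    (hfν : Integrable (fun x ↦ exp (f x)) ν) (h_int : Integrable (llr μ ν) μ) :
    ∫ x, llr μ (ν.tilted f) x ∂μ = log (∫ x, exp (f x) ∂ν) - (∫ x, f x ∂μ - ∫ x, llr μ ν x ∂μ) := by
  rw [integral_llr_tilted_right hμν hf hfν h_int]
  ring

lemma integral_sub_integral_llr_le_log_integral_exp (hμν : μ ≪ ν) (hf : Integrable f μ)
    (hfν : Integrable (fun x ↦ exp (f x)) ν) (h_int : Integrable (llr μ ν) μ) :
    ∫ x, f x ∂μ - ∫ x, llr μ ν x ∂μ ≤ log (∫ x, exp (f x) ∂ν) := by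
  have := isProbabilityMeasure_tilted hfν
  have h_gap := integral_llr_nonneg (hμν.trans (absolutelyContinuous_tilted hfν))
    (integrable_llr_tilted_right hμν hf h_int hfν)
  rw [integral_llr_tilted_right_eq_log_integral_exp_sub hμν hf hfν h_int] at h_gap
  linarith

lemma eq_tilted_of_integral_sub_integral_llr_eq (hμν : μ ≪ ν) (hf : Integrable f μ)
    (hfν : Integrable (fun x ↦ exp (f x)) ν) (h_int : Integrable (llr μ ν) μ)
    (h : ∫ x, f x ∂μ - ∫ x, llr μ ν x ∂μ = log (∫ x, exp (f x) ∂ν)) :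
    μ = ν.tilted f := by
  have := isProbabilityMeasure_tilted hfν
  refine eq_of_integral_llr_eq_zero (hμν.trans (absolutelyContinuous_tilted hfν))
    (integrable_llr_tilted_right hμν hf h_int hfν) ?_
  rw [integral_llr_tilted_right_eq_log_integral_exp_sub hμν hf hfν h_int, h, sub_self]

omit [IsProbabilityMeasure μ] in
lemma integral_sub_integral_llr_tilted_self (hfν : Integrable (fun x ↦ exp (f x)) ν)
    (hf : Integrable f (ν.tilted f)) :
    ∫ x, f x ∂(ν.tilted f) - ∫ x, llr (ν.tilted f) ν x ∂(ν.tilted f)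
      = log (∫ x, exp (f x) ∂ν) := by
  have := isProbabilityMeasure_tilted hfν
  have h_llr : llr (ν.tilted f) ν =ᵐ[ν.tilted f] fun x ↦ f x - log (∫ x, exp (f x) ∂ν) :=
    (tilted_absolutelyContinuous ν f).ae_le (log_rnDeriv_tilted_left_self hfν)
  rw [integral_congr_ae h_llr, integral_sub hf (integrable_const _), integral_const]
  simp

end DonskerVaradhan

lemma abs_exp_mul_self_le {x M : ℝ} (hx : x ≤ M) : |exp x * x| ≤ exp (-1) + |M| * exp M := by
  rcases le_or_gt x 0 with hx0 | hx0
  · have h := mul_exp_neg_le_exp_neg_one (-x)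
    rw [neg_neg] at h
    rw [abs_of_nonpos (mul_nonpos_of_nonneg_of_nonpos (exp_pos x).le hx0)]
    nlinarith [abs_nonneg M, exp_pos M]
  · rw [abs_of_pos (mul_pos (exp_pos x) hx0)]
    have : exp x * x ≤ exp M * |M| :=
      mul_le_mul (exp_le_exp.mpr hx) (hx.trans (le_abs_self M)) hx0.le (exp_pos M).le
    nlinarith [exp_pos (-1)]

section BoundedAbove

variable {α : Type*} [MeasurableSpace α] {ν : Measure α} [IsFiniteMeasure ν] {f : α → ℝ} {M : ℝ}

lemma integrable_exp_of_le (hf : Measurable f) (hM : ∀ x, f x ≤ M) :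
    Integrable (fun x ↦ exp (f x)) ν :=
  .of_bound hf.exp.aestronglyMeasurable (exp M) <| .of_forall fun x ↦ by
    rw [norm_of_nonneg (exp_pos _).le]
    exact exp_le_exp.mpr (hM x)

lemma integrable_tilted_self_of_le (hf : Measurable f) (hM : ∀ x, f x ≤ M) :
    Integrable f (ν.tilted f) := by
  rw [integrable_tilted_iff (integrable_exp_of_le hf hM)]
  exact .of_bound (hf.exp.mul hf).aestronglyMeasurable _ <| .of_forall fun x ↦ by
    simpa using abs_exp_mul_self_le (hM x)

end BoundedAbove

lemma relEnt2_eq_integral_llr {α : Type*} [MeasurableSpace α] (μ ν : Measure α) :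
    relEnt2 μ ν = ∫ x, llr μ ν x ∂μ := rfl

theorem stmt_2_general {E : Type*} [MeasurableSpace E] (P : Measure E) [IsProbabilityMeasure P]
    (φ : E → ℝ) (hφmeas : Measurable φ) (m : ℝ) (hφbdd : ∀ x, m ≤ φ x)
    (Qstar : Measure E)
    (hQstar : Qstar = P.withDensity (fun x =>
      ENNReal.ofReal (Real.exp (-φ x) / ∫ y, Real.exp (-φ y) ∂P))) :
    (∀ Q : Measure E, IsProbabilityMeasure Q → FiniteRelEnt2 Q P → Integrable φ Q →
        -Real.log (∫ x, Real.exp (-φ x) ∂P) ≤ (∫ x, φ x ∂Q) + relEnt2 Q P) ∧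
    ((∫ x, φ x ∂Qstar) + relEnt2 Qstar P = -Real.log (∫ x, Real.exp (-φ x) ∂P)) ∧
    (∀ Q : Measure E, IsProbabilityMeasure Q → FiniteRelEnt2 Q P → Integrable φ Q →
        (∫ x, φ x ∂Q) + relEnt2 Q P = -Real.log (∫ x, Real.exp (-φ x) ∂P) → Q = Qstar) := by
  obtain rfl : Qstar = P.tilted (fun x ↦ -φ x) := hQstar
  have h_le : ∀ x, -φ x ≤ -m := fun x ↦ neg_le_neg (hφbdd x)
  have h_exp : Integrable (fun x ↦ exp (-φ x)) P := integrable_exp_of_le hφmeas.neg h_le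
  simp only [relEnt2_eq_integral_llr]
  refine ⟨fun Q _ hQ hφQ ↦ ?_, ?_, fun Q _ hQ hφQ h ↦ ?_⟩
  · have := integral_sub_integral_llr_le_log_integral_exp (f := fun x ↦ -φ x)
      hQ.1 hφQ.neg h_exp hQ.2
    rw [integral_neg] at this
    linarith
  · have := integral_sub_integral_llr_tilted_self (f := fun x ↦ -φ x) h_exp
      (integrable_tilted_self_of_le hφmeas.neg h_le)
    rw [integral_neg] at this
    linarith
  · refine eq_tilted_of_integral_sub_integral_llr_eq (f := fun x ↦ -φ x) hQ.1 hφQ.neg h_exp hQ.2 ?_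
    rw [integral_neg]
    linarith

/-- Donsker–Varadhan / Gibbs variational principle: for `φ` measurable and bounded below
with `E^P[exp(−φ)] > 0`, and `dQ* = (exp(−φ)/E^P[exp(−φ)]) dP`, every probability measure
`Q` with `H(Q|P) < ∞` (and `φ` `Q`-integrable, so that all quantities are finite) satisfies
`E^Q[φ] + H(Q|P) ≥ −log E^P[exp(−φ)]`, with equality iff `Q = Q*`; in particular `Q*` is the
unique minimizer and the infimum equals `−log E^P[exp(−φ)]`. -/
theorem stmt_2 {E : Type*} [MeasurableSpace E] (P : Measure E) [IsProbabilityMeasure P]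
    (φ : E → ℝ) (hφmeas : Measurable φ) (m : ℝ) (hφbdd : ∀ x, m ≤ φ x)
    (hZpos : 0 < ∫ x, Real.exp (-φ x) ∂P)
    (Qstar : Measure E)
    (hQstar : Qstar = P.withDensity (fun x =>
      ENNReal.ofReal (Real.exp (-φ x) / ∫ y, Real.exp (-φ y) ∂P))) :
    (∀ Q : Measure E, IsProbabilityMeasure Q → FiniteRelEnt2 Q P → Integrable φ Q →
        -Real.log (∫ x, Real.exp (-φ x) ∂P) ≤ (∫ x, φ x ∂Q) + relEnt2 Q P) ∧
    ((∫ x, φ x ∂Qstar) + relEnt2 Qstar P = -Real.log (∫ x, Real.exp (-φ x) ∂P)) ∧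
    (∀ Q : Measure E, IsProbabilityMeasure Q → FiniteRelEnt2 Q P → Integrable φ Q →
        (∫ x, φ x ∂Q) + relEnt2 Q P = -Real.log (∫ x, Real.exp (-φ x) ∂P) → Q = Qstar) :=
  stmt_2_general P φ hφmeas m hφbdd Qstar hQstar
end

section
/- Three-points property: let P, Q be probability measures on a measurable space, let φ be a nonnegative measurable function with E^P[exp(−εφ)] > 0, let Q⁺ be defined by dQ⁺ = (exp(−εφ)/E^P[exp(−εφ)]) dP, and for any probability R set 𝒥(R) := E^R[φ] + (1/ε)H(R|P). Then for every probability measure Q with H(Q|P) < ∞, (1/ε)H(Q|Q⁺) + 𝒥(Q⁺) = 𝒥(Q), where 𝒥(Q⁺) = −(1/ε)log E^P[exp(−εφ)]. -/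
open MeasureTheory

/-- Real-valued relative entropy `H(Q|P) = E^Q[log dQ/dP]`. -/
noncomputable def relEnt15 {Ω : Type*} [MeasurableSpace Ω] (Q P : Measure Ω) : ℝ :=
  ∫ ω, Real.log ((Q.rnDeriv P ω).toReal) ∂Q

lemma aux_mul_exp_neg_le_one15 {t : ℝ} (ht : 0 ≤ t) : t * Real.exp (-t) ≤ 1 := by
  have h1 : t ≤ Real.exp t := by linarith [Real.add_one_le_exp t]
  have h2 : t * Real.exp (-t) ≤ Real.exp t * Real.exp (-t) :=
    mul_le_mul_of_nonneg_right h1 (Real.exp_pos _).le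
  rwa [← Real.exp_add, add_neg_cancel, Real.exp_zero] at h2

/-- Three-points property: with `dQ⁺ = (exp(−εφ)/E^P[exp(−εφ)]) dP` and
`𝒥(R) = E^R[φ] + (1/ε)H(R|P)`, one has `(1/ε)H(Q|Q⁺) + 𝒥(Q⁺) = 𝒥(Q)` for every `Q` with
finite entropy relative to `P` (and `φ` `Q`-integrable), and
`𝒥(Q⁺) = −(1/ε) log E^P[exp(−εφ)]`. -/
theorem stmt_15 {Ω : Type*} [MeasurableSpace Ω] (P : Measure Ω) [IsProbabilityMeasure P]
    (ε : ℝ) (hε : 0 < ε) (φ : Ω → ℝ) (hφmeas : Measurable φ) (hφnonneg : ∀ ω, 0 ≤ φ ω)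
    (hZpos : 0 < ∫ ω, Real.exp (-(ε * φ ω)) ∂P)
    (Qplus : Measure Ω)
    (hQplus : Qplus = P.withDensity (fun ω =>
      ENNReal.ofReal (Real.exp (-(ε * φ ω)) / ∫ ω', Real.exp (-(ε * φ ω')) ∂P)))
    (Q : Measure Ω) [IsProbabilityMeasure Q] (hQP : Q ≪ P)
    (hHfin : Integrable (fun ω => Real.log ((Q.rnDeriv P ω).toReal)) Q)
    (hφQ : Integrable φ Q) :
    (1 / ε) * relEnt15 Q Qplus +
        ((∫ ω, φ ω ∂Qplus) + (1 / ε) * relEnt15 Qplus P) =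
      (∫ ω, φ ω ∂Q) + (1 / ε) * relEnt15 Q P ∧
    (∫ ω, φ ω ∂Qplus) + (1 / ε) * relEnt15 Qplus P =
      -(1 / ε) * Real.log (∫ ω, Real.exp (-(ε * φ ω)) ∂P) := by
  set Z : ℝ := ∫ ω, Real.exp (-(ε * φ ω)) ∂P with hZ
  set g : Ω → ENNReal := fun ω => ENNReal.ofReal (Real.exp (-(ε * φ ω)) / Z) with hg
  have hg_meas : Measurable g :=
    ENNReal.measurable_ofReal.comp (((hφmeas.const_mul ε).neg.exp).div_const Z)
  have hgr_pos : ∀ ω, 0 < Real.exp (-(ε * φ ω)) / Z :=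
    fun ω => div_pos (Real.exp_pos _) hZpos
  have hg_pos : ∀ ω, g ω ≠ 0 := fun ω => by
    simp only [hg, ne_eq, ENNReal.ofReal_eq_zero, not_le]
    exact hgr_pos ω
  have hg_top : ∀ ω, g ω ≠ ⊤ := fun ω => ENNReal.ofReal_ne_top
  have hg_toReal : ∀ ω, (g ω).toReal = Real.exp (-(ε * φ ω)) / Z := fun ω => by
    rw [hg, ENNReal.toReal_ofReal (hgr_pos ω).le]
  have hlog_g : ∀ ω, Real.log ((g ω).toReal) = -(ε * φ ω) - Real.log Z := fun ω => by
    rw [hg_toReal ω, Real.log_div (Real.exp_ne_zero _) hZpos.ne', Real.log_exp]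
  -- integrability of exp(-(εφ)) under P
  have hexp_le_one : ∀ ω, Real.exp (-(ε * φ ω)) ≤ 1 := fun ω =>
    Real.exp_le_one_iff.2 (neg_nonpos.2 (mul_nonneg hε.le (hφnonneg ω)))
  have hexp_int : Integrable (fun ω => Real.exp (-(ε * φ ω))) P := by
    refine (integrable_const (1 : ℝ)).mono'
      ((hφmeas.const_mul ε).neg.exp).aestronglyMeasurable (ae_of_all _ fun ω => ?_)
    rw [Real.norm_eq_abs, abs_of_pos (Real.exp_pos _)]; exact hexp_le_one ω
  have hQplusP : Qplus ≪ P := hQplus ▸ withDensity_absolutelyContinuous P g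
  -- Qplus is a probability measure
  have hQplus_prob : IsProbabilityMeasure Qplus := by
    constructor
    rw [hQplus, withDensity_apply _ MeasurableSet.univ, Measure.restrict_univ,
      ← ofReal_integral_eq_lintegral_ofReal (hexp_int.div_const Z)
        (ae_of_all _ fun ω => (hgr_pos ω).le)]
    rw [integral_div, ← hZ, div_self hZpos.ne']
    simp
  haveI := hQplus_prob
  -- rnDeriv of Qplus wrt P
  have hrn_plus : Qplus.rnDeriv P =ᵐ[P] g := by
    rw [hQplus]; exact Measure.rnDeriv_withDensity P hg_meas
  -- φ is Qplus-integrable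
  have hφQplus : Integrable φ Qplus := by
    rw [hQplus, integrable_withDensity_iff hg_meas (ae_of_all _ fun ω => (hg_top ω).lt_top)]
    refine (integrable_const (1 / ε / Z)).mono'
      (hφmeas.mul ((((hφmeas.const_mul ε).neg.exp).div_const
        Z).ennreal_ofReal.ennreal_toReal)).aestronglyMeasurable (ae_of_all _ fun ω => ?_)
    have h1 : (ENNReal.ofReal (Real.exp (-(ε * φ ω)) / Z)).toReal
        = Real.exp (-(ε * φ ω)) / Z := ENNReal.toReal_ofReal (hgr_pos ω).le
    rw [h1, Real.norm_eq_abs, abs_of_nonneg (mul_nonneg (hφnonneg ω) (hgr_pos ω).le)]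
    have key : φ ω * Real.exp (-(ε * φ ω)) ≤ 1 / ε := by
      rw [le_div_iff₀ hε]
      have h := aux_mul_exp_neg_le_one15 (mul_nonneg hε.le (hφnonneg ω))
      nlinarith [Real.exp_pos (-(ε * φ ω))]
    rw [← mul_div_assoc]
    gcongr
  -- relEnt15 Qplus P
  have relEnt_plus : relEnt15 Qplus P = -(ε * ∫ ω, φ ω ∂Qplus) - Real.log Z := by
    have hcongr : (fun ω => Real.log ((Qplus.rnDeriv P ω).toReal))
        =ᵐ[Qplus] fun ω => -(ε * φ ω) - Real.log Z := by
      filter_upwards [hQplusP.ae_le hrn_plus] with ω h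
      rw [h, hlog_g ω]
    have hi : Integrable (fun a => -(ε * φ a)) Qplus := (hφQplus.const_mul ε).neg
    rw [relEnt15, integral_congr_ae hcongr, integral_sub hi (integrable_const _),
      integral_neg, integral_const_mul, integral_const]
    simp
  -- relEnt15 Q Qplus
  have hrn_q : Q.rnDeriv Qplus =ᵐ[P] fun ω => (g ω)⁻¹ * Q.rnDeriv P ω := by
    rw [hQplus]
    exact Measure.rnDeriv_withDensity_right Q P hg_meas.aemeasurable
      (ae_of_all _ hg_pos) (ae_of_all _ hg_top)
  have hAE : ∀ᵐ ω ∂Q, Real.log ((Q.rnDeriv Qplus ω).toReal)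
      = ε * φ ω + Real.log Z + Real.log ((Q.rnDeriv P ω).toReal) := by
    filter_upwards [hQP.ae_le hrn_q, Measure.rnDeriv_pos hQP,
      hQP.ae_le (Measure.rnDeriv_lt_top Q P)] with ω h1 h2 h3
    have hrpos : 0 < (Q.rnDeriv P ω).toReal := ENNReal.toReal_pos h2.ne' h3.ne
    rw [h1, ENNReal.toReal_mul, ENNReal.toReal_inv, hg_toReal ω,
      Real.log_mul (by positivity) hrpos.ne', Real.log_inv,
      Real.log_div (Real.exp_ne_zero _) hZpos.ne', Real.log_exp]
    ring
  have relEnt_Q : relEnt15 Q Qplus = ε * (∫ ω, φ ω ∂Q) + Real.log Z + relEnt15 Q P := by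
    have hi1 : Integrable (fun a => ε * φ a + Real.log Z) Q :=
      (hφQ.const_mul ε).add (integrable_const _)
    have hi2 : Integrable (fun a => ε * φ a) Q := hφQ.const_mul ε
    rw [relEnt15, integral_congr_ae hAE, integral_add hi1 hHfin,
      integral_add hi2 (integrable_const _), integral_const_mul, integral_const, relEnt15]
    simp
  have h2 : (∫ ω, φ ω ∂Qplus) + (1 / ε) * relEnt15 Qplus P = -(1 / ε) * Real.log Z := by
    rw [relEnt_plus]; field_simp; ring
  refine ⟨?_, h2⟩
  rw [relEnt_Q, relEnt_plus]
  field_simp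
  ring
end
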